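/- arXiv:1306.3507 — 2 statements merged into one kernel-verified Lean document; each statement's English description precedes it below -/
import Mathlib

section
/- For any multi-tilde-bar expression E'₁,ₙ and all 1 ≤ j < l ≤ n (with appropriate splitting at j), the concatenation L(E'₁,ⱼ) ⊙ε L(E'ⱼ₊₁,ₗ) is contained in L(E'₁,ₗ), where ⊙ε denotes concatenation followed by removal of ε when (1,l) is a bar pair, and plain concatenation otherwise. -/
attribute [local instance] Classical.propDecidable

namespace Mtb

variable {A : Type*}

/-- `First L`: letters that can begin a word of `L`. -/
def First (L : Set (List A)) : Set A := {x | ∃ v, x :: v ∈ L}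

/-- `Last L`: letters that can end a word of `L`. -/
def Last (L : Set (List A)) : Set A := {x | ∃ u, u ++ [x] ∈ L}

/-- `Follow x L`: letters that can immediately follow `x` in a word of `L`. -/
def Follow (x : A) (L : Set (List A)) : Set A := {y | ∃ u v, u ++ x :: y :: v ∈ L}

/-- Letters occurring in some word of `L`. -/
def lettersOf (L : Set (List A)) : Set A := {a | ∃ w ∈ L, a ∈ w}

/-- Concatenation of languages. -/
def cat (L M : Set (List A)) : Set (List A) := {w | ∃ u ∈ L, ∃ v ∈ M, w = u ++ v}

/-- `nullL L = {ε}` if `ε ∈ L`, `∅` otherwise. -/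
def nullL (L : Set (List A)) : Set (List A) := {w | w = [] ∧ [] ∈ L}

/-- Apply the tilde (add ε) or bar (remove ε) operator attached to the pair `p`, if any. -/
def adjust (B T : Set (ℕ × ℕ)) (p : ℕ × ℕ) (L : Set (List A)) : Set (List A) :=
  if p ∈ T then L ∪ {[]} else if p ∈ B then L \ {[]} else L

/-- The language of the multi-tilde-bar expression `E'_{i,j}` built from factor languages
`E`, bar set `B` and tilde set `T`. -/
noncomputable def mtb (E : ℕ → Set (List A)) (B T : Set (ℕ × ℕ)) (i j : ℕ) : Set (List A) :=
  if i = j then adjust B T (i, i) (E i)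
  else adjust B T (i, j) (⋃ k ∈ Set.Ico i j, cat (mtb E B T i k) (mtb E B T (k + 1) j))
termination_by j - i
decreasing_by all_goals (simp_all [Set.mem_Ico]; omega)

/-- The bars-and-tildes sets are well-formed for `n` factors: disjoint, and within range. -/
def WellFormed (B T : Set (ℕ × ℕ)) (n : ℕ) : Prop :=
  Disjoint B T ∧ ∀ p ∈ B ∪ T, 1 ≤ p.1 ∧ p.1 ≤ p.2 ∧ p.2 ≤ n

/-- The `⊙ε` operator at level `p`: concatenation, with `ε` removed when `p` is a bar pair. -/
def odot (B : Set (ℕ × ℕ)) (p : ℕ × ℕ) (L M : Set (List A)) : Set (List A) :=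
  if p ∈ B then cat L M \ {[]} else cat L M

end Mtb

namespace Mtb

variable {A : Type*}

theorem odot_subset_adjust_of_cat_subset (B T : Set (ℕ × ℕ)) (p : ℕ × ℕ)
    {L M K : Set (List A)} (h : cat L M ⊆ K) : odot B p L M ⊆ adjust B T p K := by
  unfold odot adjust
  split_ifs
  · exact Set.sdiff_subset.trans (h.trans Set.subset_union_left)
  · exact Set.sdiff_subset_sdiff_left h
  · exact h.trans Set.subset_union_left
  · exact h

theorem mtb_of_ne (E : ℕ → Set (List A)) (B T : Set (ℕ × ℕ)) {i j : ℕ} (h : i ≠ j) :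
    mtb E B T i j =
      adjust B T (i, j) (⋃ k ∈ Set.Ico i j, cat (mtb E B T i k) (mtb E B T (k + 1) j)) := by
  rw [mtb, if_neg h]

theorem odot_mtb_subset_mtb (E : ℕ → Set (List A)) (B T : Set (ℕ × ℕ)) {i j l : ℕ}
    (hij : i ≤ j) (hjl : j < l) :
    odot B (i, l) (mtb E B T i j) (mtb E B T (j + 1) l) ⊆ mtb E B T i l := by
  rw [mtb_of_ne E B T (show i ≠ l by omega)]
  exact odot_subset_adjust_of_cat_subset B T (i, l)
    (Set.subset_biUnion_of_mem (u := fun k => cat (mtb E B T i k) (mtb E B T (k + 1) l))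
      (Set.mem_Ico.mpr ⟨hij, hjl⟩))

end Mtb

open Mtb in
theorem mtb_odot_subset_general {A : Type*} (E : ℕ → Set (List A))
    (B T : Set (ℕ × ℕ))
    (j l : ℕ) (hj : 1 ≤ j) (hjl : j < l) :
    odot B (1, l) (mtb E B T 1 j) (mtb E B T (j + 1) l) ⊆ mtb E B T 1 l :=
  odot_mtb_subset_mtb E B T hj hjl

open Mtb in
/-- For all `1 ≤ j < l ≤ n`, the concatenation `L(E'_{1,j}) ⊙ε L(E'_{j+1,l})` is contained
in `L(E'_{1,l})`, where `⊙ε` removes `ε` when `(1,l)` is a bar pair. -/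
theorem mtb_odot_subset {A : Type*} (n : ℕ) (E : ℕ → Set (List A))
    (B T : Set (ℕ × ℕ)) (hwf : WellFormed B T n)
    (j l : ℕ) (hj : 1 ≤ j) (hjl : j < l) (hl : l ≤ n) :
    odot B (1, l) (mtb E B T 1 j) (mtb E B T (j + 1) l) ⊆ mtb E B T 1 l :=
  mtb_odot_subset_general E B T j l hj hjl
end

section
/- Let E be a regular expression in linear form (each letter occurs at most once). Then a nonempty word x₁x₂···xₘ belongs to L(E) if and only if x₁ ∈ First(E), xₘ ∈ Last(E), and xᵢ₊₁ ∈ Follow(xᵢ, E) for all 1 ≤ i < m. Consequently the position automaton of E recognizes L(E). -/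
/-!
Call `L` local if every nonempty word starting in `First L`, ending in `Last L` and moving
only along `Follow L` lies in `L`. The languages `∅`, `{ε}` and `{a}` are local, and locality is
preserved by union and concatenation of languages over disjoint sets of letters, and by Kleene
star. For concatenation, a word of `L·M` that reaches a letter of `M` can only continue along
`Follow M`, so it splits as an `L`-part followed by an `M`-part; for the star, a step that is not
in `Follow L` goes from `Last L` to `First L`, and the word is cut there. Linearity makes the
letter sets of the two operands of every `+` and `·` disjoint, so `L(E)` is local. A run of the
position automaton from `q₀` on a nonempty word ends in its last letter exactly when the word
starts in `First` and moves along `Follow`, so the automaton accepts the local language with the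
same `First`, `Last`, `Follow` and nullability as `L(E)`, which is `L(E)` itself.
-/

attribute [local instance] Classical.propDecidable

namespace Mtb

/-- The list of letter occurrences of a regular expression. -/
def lettersList {A : Type*} : RegularExpression A → List A
  | .zero => []
  | .epsilon => []
  | .char a => [a]
  | .plus P Q => lettersList P ++ lettersList Q
  | .comp P Q => lettersList P ++ lettersList Q
  | .star P => lettersList P

/-- A regular expression is in linear form if each letter occurs at most once in it. -/
def Linear {A : Type*} (E : RegularExpression A) : Prop := (lettersList E).Nodup

/-- The position automaton of a language `L` over the alphabet of positions: states are
`none` (the initial state `q₀`) and `some x` for positions `x`; there is a transition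
labelled `a` from `q₀` to `some a` when `a ∈ First L`, and from `some x` to `some a`
when `a ∈ Follow x L`; final states are `some x` for `x ∈ Last L`, plus `q₀` if `ε ∈ L`. -/
def positionNFA {A : Type*} (L : Set (List A)) : NFA A (Option A) where
  step q a :=
    {s | s = some a ∧ match q with
          | none => a ∈ First L
          | some x => a ∈ Follow x L}
  start := {none}
  accept := {q | (∃ x ∈ Last L, q = some x) ∨ (q = none ∧ [] ∈ L)}

end Mtb

namespace List

theorem IsChain.exists_eq_append_of_absorbing {α : Type*} {R : α → α → Prop} {S : Set α}
    (hS : ∀ a b, a ∈ S → R a b → b ∈ S) {w : List α} (h : w.IsChain R) :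
    ∃ u v, w = u ++ v ∧ (∀ a ∈ u, a ∉ S) ∧ ∀ a ∈ v, a ∈ S := by
  classical
  refine ⟨w.takeWhile (· ∉ S), w.dropWhile (· ∉ S), (takeWhile_append_dropWhile).symm,
    fun a ha => by simpa using mem_takeWhile_imp ha, ?_⟩
  have hv : (w.dropWhile (· ∉ S)).IsChain R := by
    rw [← takeWhile_append_dropWhile (p := (· ∉ S)) (l := w)] at h
    exact h.right_of_append
  exact hv.induction _ _ (fun a b hab ha => hS a b ha hab)
    fun hne => by simpa using head_dropWhile_not (fun a => decide (a ∉ S)) hne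

end List

namespace Mtb

section LocalLanguages

open List Computability

variable {A : Type*}

section Letters

variable {L : Set (List A)} {a b : A}

theorem first_subset_lettersOf : First L ⊆ lettersOf L :=
  fun _ ⟨_, hv⟩ => ⟨_, hv, mem_cons_self⟩

theorem last_subset_lettersOf : Last L ⊆ lettersOf L :=
  fun _ ⟨_, hu⟩ => ⟨_, hu, by simp⟩

theorem mem_lettersOf_of_mem_follow (h : b ∈ Follow a L) :
    a ∈ lettersOf L ∧ b ∈ lettersOf L := by
  obtain ⟨u, v, huv⟩ := h
  exact ⟨⟨_, huv, by simp⟩, ⟨_, huv, by simp⟩⟩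

end Letters

section Local

variable {L : Set (List A)} {w : List A}

theorem head_mem_first (hw : w ≠ []) (h : w ∈ L) : w.head hw ∈ First L :=
  ⟨w.tail, by rwa [cons_head_tail]⟩

theorem getLast_mem_last (hw : w ≠ []) (h : w ∈ L) : w.getLast hw ∈ Last L :=
  ⟨w.dropLast, by rwa [dropLast_append_getLast]⟩

theorem isChain_follow_of_mem (h : w ∈ L) : w.IsChain fun a b => b ∈ Follow a L :=
  isChain_iff_forall_rel_of_append_cons_cons.2 fun _ _ u v hw => ⟨u, v, hw ▸ h⟩

/-- `L` is a *local* language. Membership implies the three conditions for every `L`, so only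
the converse is required. -/
def IsLocal (L : Set (List A)) : Prop :=
  ∀ w (hw : w ≠ []), w.head hw ∈ First L → w.getLast hw ∈ Last L →
    w.IsChain (fun a b => b ∈ Follow a L) → w ∈ L

theorem IsLocal.mem_iff (hL : IsLocal L) (hw : w ≠ []) :
    w ∈ L ↔ w.head hw ∈ First L ∧ w.getLast hw ∈ Last L ∧
      w.IsChain fun a b => b ∈ Follow a L :=
  ⟨fun h => ⟨head_mem_first hw h, getLast_mem_last hw h, isChain_follow_of_mem h⟩,
    fun ⟨h₁, h₂, h₃⟩ => hL w hw h₁ h₂ h₃⟩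

end Local

section Union

variable {L M : Set (List A)} {a : A}

theorem first_union : First (L ∪ M) = First L ∪ First M := by
  ext; simp only [First, Set.mem_ofPred_eq, Set.mem_union, exists_or]

theorem last_union : Last (L ∪ M) = Last L ∪ Last M := by
  ext; simp only [Last, Set.mem_ofPred_eq, Set.mem_union, exists_or]

theorem follow_union : Follow a (L ∪ M) = Follow a L ∪ Follow a M := by
  ext; simp only [Follow, Set.mem_ofPred_eq, Set.mem_union, exists_or]

end Union

section LanguageOperations

variable {l m : Language A} {a b : A}

theorem first_reverse : First l.reverse = Last l := by
  ext a
  constructor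
  · rintro ⟨v, hv⟩
    have := Language.mem_reverse.1 hv
    rw [reverse_cons] at this
    exact ⟨v.reverse, this⟩
  · rintro ⟨u, hu⟩
    refine ⟨u.reverse, Language.mem_reverse.2 ?_⟩
    rwa [reverse_cons, reverse_reverse]

theorem mem_first_mul (h : a ∈ First (l * m)) : a ∈ First l ∨ [] ∈ l ∧ a ∈ First m := by
  obtain ⟨v, hv⟩ := h
  obtain ⟨u, hu, u', hu', huv⟩ := Language.mem_mul.1 hv
  rcases append_eq_cons_iff.1 huv with ⟨rfl, rfl⟩ | ⟨u, rfl, rfl⟩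
  exacts [Or.inr ⟨hu, v, hu'⟩, Or.inl ⟨u, hu⟩]

theorem mem_last_mul (h : a ∈ Last (l * m)) : a ∈ Last m ∨ a ∈ Last l ∧ [] ∈ m := by
  rw [← first_reverse, Language.reverse_mul] at h
  rcases mem_first_mul h with h | ⟨hm, h⟩
  · exact Or.inl (first_reverse ▸ h)
  · exact Or.inr ⟨first_reverse ▸ h, Language.mem_reverse.1 hm⟩

theorem mem_follow_mul (h : b ∈ Follow a (l * m)) :
    b ∈ Follow a l ∨ b ∈ Follow a m ∨ a ∈ Last l ∧ b ∈ First m := by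
  obtain ⟨p, q, hpq⟩ := h
  obtain ⟨u, hu, u', hu', huv⟩ := Language.mem_mul.1 hpq
  rcases append_eq_append_iff.1 huv with ⟨r, rfl, rfl⟩ | ⟨r, rfl, hr⟩
  · exact Or.inr (Or.inl ⟨r, q, hu'⟩)
  · rcases r with _ | ⟨c, _ | ⟨d, r⟩⟩
    · exact Or.inr (Or.inl ⟨[], q, hr ▸ hu'⟩)
    · obtain ⟨rfl, rfl⟩ := cons_eq_cons.1 hr
      exact Or.inr (Or.inr ⟨⟨p, hu⟩, ⟨q, hu'⟩⟩)
    · obtain ⟨rfl, rfl, rfl⟩ : a = c ∧ b = d ∧ q = r ++ u' := by simpa using hr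
      exact Or.inl ⟨p, r, hu⟩

theorem first_kstar : First (l∗ : Language A) = First l := by
  ext a
  refine ⟨fun ⟨v, hv⟩ => ?_, fun ⟨v, hv⟩ => ⟨v, le_kstar (a := l) hv⟩⟩
  rw [Language.kstar_def_nonempty] at hv
  obtain ⟨S, hS, hSl⟩ := hv
  rcases S with _ | ⟨_ | ⟨c, y⟩, S⟩
  · simp at hS
  · exact absurd rfl (hSl _ mem_cons_self).2
  · obtain ⟨rfl, -⟩ : a = c ∧ _ := by simpa using hS
    exact ⟨y, (hSl _ mem_cons_self).1⟩

theorem last_kstar : Last (l∗ : Language A) = Last l := by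
  rw [← first_reverse, ← first_reverse, Language.reverse_kstar, first_kstar]

theorem mem_follow_kstar (h : b ∈ Follow a (l∗ : Language A)) :
    b ∈ Follow a l ∨ a ∈ Last l ∧ b ∈ First l := by
  obtain ⟨p, q, hpq⟩ := h
  obtain ⟨S, hS, hSl⟩ := Language.mem_kstar.1 hpq
  clear hpq
  induction S generalizing p with
  | nil => simp at hS
  | cons y S ih =>
    have hSl' : ∀ z ∈ S, z ∈ l := fun z hz => hSl z (mem_cons_of_mem y hz)
    rw [flatten_cons] at hS
    rcases append_eq_append_iff.1 hS with ⟨r, rfl, hr⟩ | ⟨r, rfl, hr⟩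
    · rcases r with _ | ⟨c, _ | ⟨d, r⟩⟩
      · exact ih [] hr hSl'
      · obtain ⟨rfl, hq⟩ := cons_eq_cons.1 hr
        refine Or.inr ⟨⟨p, hSl _ mem_cons_self⟩, first_kstar ▸ ⟨q, ?_⟩⟩
        exact hq ▸ Language.join_mem_kstar hSl'
      · obtain ⟨rfl, rfl, -⟩ : a = c ∧ b = d ∧ _ := by simpa using hr
        exact Or.inl ⟨p, r, hSl _ mem_cons_self⟩
    · exact ih r hr.symm hSl'

end LanguageOperations

section Closure

variable {L M : Set (List A)} {l m : Language A} {a b : A}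

theorem isLocal_zero : IsLocal (0 : Language A) :=
  fun _ _ ⟨_, h⟩ => absurd h (Language.notMem_zero _)

theorem isLocal_one : IsLocal (1 : Language A) :=
  fun _ _ ⟨_, h⟩ => absurd h (cons_ne_nil _ _)

theorem isLocal_singleton (a : A) : IsLocal ({[a]} : Set (List A)) := by
  rintro (_ | ⟨c, _ | ⟨d, w⟩⟩) hw ⟨v, hv⟩ - hc
  · exact absurd rfl hw
  · obtain ⟨rfl, -⟩ : c = a ∧ v = [] := by simpa using hv
    rfl
  · obtain ⟨u, v, huv⟩ := (isChain_cons_cons.1 hc).1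
    have := congrArg length huv
    simp only [length_append, length_cons, length_nil, zero_add] at this
    omega

theorem IsLocal.mem_of_mem_first_of_union (hL : IsLocal L)
    (hLM : Disjoint (lettersOf L) (lettersOf M)) {w : List A} (hw : w ≠ [])
    (hf : w.head hw ∈ First L) (hl : w.getLast hw ∈ Last (L ∪ M))
    (hc : w.IsChain fun a b => b ∈ Follow a (L ∪ M)) : w ∈ L := by
  have hfollow : ∀ a b, a ∈ lettersOf L → b ∈ Follow a (L ∪ M) → b ∈ Follow a L := by
    intro a b ha hab
    rw [follow_union] at hab
    exact hab.resolve_right fun h => hLM.notMem_of_mem_left ha (mem_lettersOf_of_mem_follow h).1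
  have hletters : ∀ a ∈ w, a ∈ lettersOf L :=
    hc.induction _ _ (fun a b hab ha => (mem_lettersOf_of_mem_follow (hfollow a b ha hab)).2)
      fun _ => first_subset_lettersOf hf
  refine hL w hw hf ?_ (hc.imp_of_mem_imp fun a b ha _ => hfollow a b (hletters a ha))
  rw [last_union] at hl
  exact hl.resolve_right fun h =>
    hLM.notMem_of_mem_left (hletters _ (getLast_mem hw)) (last_subset_lettersOf h)

theorem IsLocal.union (hL : IsLocal L) (hM : IsLocal M)
    (hLM : Disjoint (lettersOf L) (lettersOf M)) : IsLocal (L ∪ M) := by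
  intro w hw hf hl hc
  rw [first_union] at hf
  rcases hf with hf | hf
  · exact Or.inl (hL.mem_of_mem_first_of_union hLM hw hf hl hc)
  · rw [Set.union_comm] at hl hc ⊢
    exact Or.inl (hM.mem_of_mem_first_of_union hLM.symm hw hf hl hc)

theorem mem_first_left_of_mem_first_mul (ha : a ∉ lettersOf m) (h : a ∈ First (l * m)) :
    a ∈ First l :=
  (mem_first_mul h).resolve_right fun h => ha (first_subset_lettersOf h.2)

theorem mem_first_right_of_mem_first_mul (hlm : Disjoint (lettersOf l) (lettersOf m))
    (ha : a ∈ lettersOf m) (h : a ∈ First (l * m)) : [] ∈ l ∧ a ∈ First m :=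
  (mem_first_mul h).resolve_left fun h => hlm.notMem_of_mem_left (first_subset_lettersOf h) ha

theorem mem_last_left_of_mem_last_mul (ha : a ∉ lettersOf m) (h : a ∈ Last (l * m)) :
    a ∈ Last l ∧ [] ∈ m :=
  (mem_last_mul h).resolve_left fun h => ha (last_subset_lettersOf h)

theorem mem_last_right_of_mem_last_mul (hlm : Disjoint (lettersOf l) (lettersOf m))
    (ha : a ∈ lettersOf m) (h : a ∈ Last (l * m)) : a ∈ Last m :=
  (mem_last_mul h).resolve_right fun h => hlm.notMem_of_mem_left (last_subset_lettersOf h.1) ha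

theorem mem_follow_left_of_mem_follow_mul (ha : a ∉ lettersOf m) (hb : b ∉ lettersOf m)
    (h : b ∈ Follow a (l * m)) : b ∈ Follow a l := by
  rcases mem_follow_mul h with h | h | ⟨-, h⟩
  · exact h
  · exact absurd (mem_lettersOf_of_mem_follow h).1 ha
  · exact absurd (first_subset_lettersOf h) hb

theorem mem_follow_right_of_mem_follow_mul (hlm : Disjoint (lettersOf l) (lettersOf m))
    (ha : a ∈ lettersOf m) (h : b ∈ Follow a (l * m)) : b ∈ Follow a m := by
  rcases mem_follow_mul h with h | h | ⟨h, -⟩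
  · exact absurd ha (hlm.notMem_of_mem_left (mem_lettersOf_of_mem_follow h).1)
  · exact h
  · exact absurd ha (hlm.notMem_of_mem_left (last_subset_lettersOf h))

theorem mem_last_first_of_mem_follow_mul (hlm : Disjoint (lettersOf l) (lettersOf m))
    (ha : a ∉ lettersOf m) (hb : b ∈ lettersOf m) (h : b ∈ Follow a (l * m)) :
    a ∈ Last l ∧ b ∈ First m := by
  rcases mem_follow_mul h with h | h | h
  · exact absurd hb (hlm.notMem_of_mem_left (mem_lettersOf_of_mem_follow h).2)
  · exact absurd (mem_lettersOf_of_mem_follow h).1 ha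
  · exact h

theorem IsLocal.mul (hl : IsLocal l) (hm : IsLocal m)
    (hlm : Disjoint (lettersOf l) (lettersOf m)) : IsLocal (l * m) := by
  intro w hw hf hlast hc
  -- once the word reaches a letter of `m` it stays among them; split it there
  obtain ⟨u, v, rfl, hu, hv⟩ := hc.exists_eq_append_of_absorbing fun a b ha hab =>
    (mem_lettersOf_of_mem_follow (mem_follow_right_of_mem_follow_mul hlm ha hab)).2
  have hjoin (hu0 : u ≠ []) (hv0 : v ≠ []) : u.getLast hu0 ∈ Last l ∧ v.head hv0 ∈ First m :=
    mem_last_first_of_mem_follow_mul hlm (hu _ (getLast_mem hu0)) (hv _ (head_mem hv0))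
      (hc.rel_getLast_head_of_append hu0 hv0)
  obtain ⟨hcu, hcv, -⟩ := isChain_append.1 hc
  refine Language.mem_mul.2 ⟨u, ?_, v, ?_, rfl⟩
  · rcases eq_or_ne u [] with rfl | hu0
    · simp only [nil_append] at hw hf
      exact (mem_first_right_of_mem_first_mul hlm (hv _ (head_mem hw)) hf).1
    refine hl u hu0 ?_ ?_ (hcu.imp_of_mem_imp fun a b ha hb =>
      mem_follow_left_of_mem_follow_mul (hu a ha) (hu b hb))
    · rw [head_append_of_ne_nil hu0] at hf
      exact mem_first_left_of_mem_first_mul (hu _ (head_mem hu0)) hf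
    rcases eq_or_ne v [] with rfl | hv0
    · simp only [append_nil] at hlast
      exact (mem_last_left_of_mem_last_mul (hu _ (getLast_mem hu0)) hlast).1
    exact (hjoin hu0 hv0).1
  · rcases eq_or_ne v [] with rfl | hv0
    · simp only [append_nil] at hw hlast
      exact (mem_last_left_of_mem_last_mul (hu _ (getLast_mem hw)) hlast).2
    refine hm v hv0 ?_ ?_ (hcv.imp_of_mem_imp fun a _ ha _ =>
      mem_follow_right_of_mem_follow_mul hlm (hv a ha))
    · rcases eq_or_ne u [] with rfl | hu0
      · simp only [nil_append] at hf
        exact (mem_first_right_of_mem_first_mul hlm (hv _ (head_mem hv0)) hf).2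
      exact (hjoin hu0 hv0).2
    · rw [getLast_append_of_ne_nil _ hv0] at hlast
      exact mem_last_right_of_mem_last_mul hlm (hv _ (getLast_mem hv0)) hlast

theorem IsLocal.kstar (hl : IsLocal l) : IsLocal (l∗ : Language A) := by
  intro w
  induction hn : w.length using Nat.strong_induction_on generalizing w with
  | _ n ih =>
  intro hw hf hlast hc
  by_cases hcl : w.IsChain fun a b => b ∈ Follow a l
  · rw [first_kstar] at hf
    rw [last_kstar] at hlast
    exact le_kstar (a := l) (hl w hw hf hlast hcl)
  obtain ⟨a, b, u, v, rfl, hab⟩ : ∃ a b u v, w = u ++ a :: b :: v ∧ b ∉ Follow a l := by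
    simpa [isChain_iff_forall_rel_of_append_cons_cons] using hcl
  obtain ⟨hcu, hab', hcv⟩ := isChain_append_cons_cons.1 hc
  obtain ⟨ha, hb⟩ := (mem_follow_kstar hab').resolve_left hab
  have hu : u ++ [a] ∈ (l∗ : Language A) :=
    ih _ (by simp only [length_append, length_cons, length_nil] at hn ⊢; omega) _ rfl (by simp)
      (by cases u <;> exact hf) (by simpa [last_kstar] using ha) hcu
  have hv : b :: v ∈ (l∗ : Language A) := by
    refine ih _ (by simp only [length_append, length_cons] at hn ⊢; omega) _ rfl (cons_ne_nil _ _)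
      (by rwa [first_kstar]) ?_ hcv
    rwa [getLast_append_of_ne_nil _ (cons_ne_nil _ _), getLast_cons (cons_ne_nil _ _)] at hlast
  have := kstar_mul_kstar l ▸ Language.mem_mul.2 ⟨_, hu, _, hv, rfl⟩
  rw [append_assoc, singleton_append] at this
  exact this

end Closure

section RegularExpression

theorem mem_lettersList_of_mem_matches' {a : A} :
    ∀ {E : RegularExpression A} {w : List A}, w ∈ E.matches' → a ∈ w → a ∈ lettersList E
  | .zero, _, hw, _ => absurd hw (Language.notMem_zero _)
  | .epsilon, _, hw, ha => by rw [(Language.mem_one _).1 hw] at ha; exact absurd ha not_mem_nil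
  | .char _, _, hw, ha => by rw [(hw : _ = _)] at ha; exact ha
  | .plus _ _, _, hw, ha => by
    rcases (Language.mem_add _ _ _).1 hw with hw | hw
    exacts [mem_append_left _ (mem_lettersList_of_mem_matches' hw ha),
      mem_append_right _ (mem_lettersList_of_mem_matches' hw ha)]
  | .comp _ _, _, hw, ha => by
    obtain ⟨u, hu, v, hv, rfl⟩ := Language.mem_mul.1 hw
    rcases mem_append.1 ha with ha | ha
    exacts [mem_append_left _ (mem_lettersList_of_mem_matches' hu ha),
      mem_append_right _ (mem_lettersList_of_mem_matches' hv ha)]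
  | .star P, _, hw, ha => by
    obtain ⟨S, rfl, hS⟩ := Language.mem_kstar.1 hw
    obtain ⟨u, hu, hau⟩ := mem_flatten.1 ha
    exact mem_lettersList_of_mem_matches' (E := P) (hS u hu) hau

theorem disjoint_lettersOf_matches' {P Q : RegularExpression A}
    (h : (lettersList P ++ lettersList Q).Nodup) :
    Disjoint (lettersOf P.matches') (lettersOf Q.matches') :=
  Set.disjoint_left.2 fun a ⟨_, hu, hau⟩ ⟨_, hv, hav⟩ =>
    (nodup_append.1 h).2.2 a (mem_lettersList_of_mem_matches' hu hau) a
      (mem_lettersList_of_mem_matches' hv hav) rfl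

theorem isLocal_matches' : ∀ {E : RegularExpression A}, Linear E → IsLocal E.matches'
  | .zero, _ => isLocal_zero
  | .epsilon, _ => isLocal_one
  | .char a, _ => isLocal_singleton a
  | .plus _ _, h => (isLocal_matches' (nodup_append.1 h).1).union
      (isLocal_matches' (nodup_append.1 h).2.1) (disjoint_lettersOf_matches' h)
  | .comp _ _, h => (isLocal_matches' (nodup_append.1 h).1).mul
      (isLocal_matches' (nodup_append.1 h).2.1) (disjoint_lettersOf_matches' h)
  | .star P, h => (isLocal_matches' (E := P) h).kstar

end RegularExpression

section PositionNFA

variable {L : Set (List A)}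

theorem mem_eval_positionNFA {w : List A} {q : Option A} :
    q ∈ (positionNFA L).eval w ↔
      q = w.getLast? ∧ (∀ a ∈ w.head?, a ∈ First L) ∧ w.IsChain fun a b => b ∈ Follow a L := by
  induction w using List.reverseRecOn generalizing q with
  | nil => simp [positionNFA]
  | append_singleton u a ih =>
    rw [NFA.eval_append_singleton, NFA.mem_stepSet]
    simp only [ih]
    rcases u.eq_nil_or_concat with rfl | ⟨u, b, rfl⟩
    · simp [positionNFA]
    · simp [positionNFA, and_assoc, and_left_comm, and_comm]

theorem IsLocal.accepts_positionNFA (hL : IsLocal L) : (positionNFA L).accepts = L := by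
  ext w
  -- membership in `L` as a set rather than a language, as in `positionNFA`'s accepting states
  show w ∈ (positionNFA L).accepts ↔ w ∈ L
  rw [NFA.mem_accepts]
  simp only [← NFA.eval.eq_1, mem_eval_positionNFA]
  rcases eq_or_ne w [] with rfl | hw
  · simp [positionNFA]
  · rw [hL.mem_iff hw]
    simp [positionNFA, getLast?_eq_some_getLast hw, head?_eq_some_head hw, and_left_comm]

end PositionNFA

end LocalLanguages

/-- For a regular expression `E` in linear form, a nonempty word `x₁⋯xₘ` belongs to `L(E)`
iff `x₁ ∈ First(E)`, `xₘ ∈ Last(E)` and `xᵢ₊₁ ∈ Follow(xᵢ, E)` for all `i < m`.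
Consequently, the position automaton of `E` recognizes `L(E)`. -/
theorem position_automaton_correct {A : Type*} (E : RegularExpression A) (hE : Linear E) :
    (∀ (w : List A) (hw : w ≠ []),
        (w ∈ E.matches' ↔
          w.head hw ∈ First (E.matches' : Set (List A)) ∧
            w.getLast hw ∈ Last (E.matches' : Set (List A)) ∧
            w.Chain' fun a b => b ∈ Follow a (E.matches' : Set (List A)))) ∧
      (positionNFA (E.matches' : Set (List A))).accepts = E.matches' :=
  ⟨fun _ hw => (isLocal_matches' hE).mem_iff hw, (isLocal_matches' hE).accepts_positionNFA⟩

end Mtb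
end
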